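/- Let G be a prime 3^{+1}-rank-connected graph with at least 8 vertices, and let {a,b,c} be a triplet of G. Then G∖a, G∖b, and G∖c are all prime. -/

import Mathlib

open Finset

variable {V : Type} [Fintype V] [DecidableEq V]

open scoped Classical

/-- The rank over GF(2) of the `X × Y` submatrix of the adjacency matrix of `G`. -/
noncomputable def cutRankOn (G : SimpleGraph V) (X Y : Finset V) : ℕ :=
  (Matrix.of (fun (i : ↥X) (j : ↥Y) => if G.Adj i.1 j.1 then (1 : ZMod 2) else 0)).rank

/-- The cut-rank of `X` in the graph `G` restricted to the vertex set `S`: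
the rank over GF(2) of the `X × (S \ X)` submatrix of the adjacency matrix. -/
noncomputable def cutRank (G : SimpleGraph V) (S X : Finset V) : ℕ :=
  cutRankOn G X (S \ X)

/-- `A` gives a split of the graph `G` restricted to the vertex set `S`. -/
def IsSplit (G : SimpleGraph V) (S A : Finset V) : Prop :=
  A ⊆ S ∧ cutRank G S A ≤ 1 ∧ 2 ≤ A.card ∧ 2 ≤ (S \ A).card

/-- The graph `G` restricted to the vertex set `S` is prime: connected and with no split. -/
def IsPrime (G : SimpleGraph V) (S : Finset V) : Prop :=
  (G.induce (↑S : Set V)).Connected ∧ ∀ A, ¬ IsSplit G S A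

/-- `G` restricted to `S` is `k⁺ˡ`-rank-connected. -/
def RankConn (G : SimpleGraph V) (S : Finset V) (k l : ℤ) : Prop :=
  ∀ X ⊆ S, (cutRank G S X : ℤ) < k →
    min (X.card : ℤ) (((S \ X).card : ℤ)) < k + l

/-- `G` restricted to `S` is `k`-rank-connected. -/
def RankConnAll (G : SimpleGraph V) (S : Finset V) (k : ℤ) : Prop :=
  ∀ m : ℤ, m ≤ k → RankConn G S m 0

def SideA (G : SimpleGraph V) (v w x : V) : Prop := G.Adj v x ∧ ¬ G.Adj w x ∧ x ≠ w
def SideB (G : SimpleGraph V) (v w x : V) : Prop := G.Adj w x ∧ ¬ G.Adj v x ∧ x ≠ v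
def SideC (G : SimpleGraph V) (v w x : V) : Prop := G.Adj v x ∧ G.Adj w x

/-- `x` and `y` lie in different ones among the three sets
`N(v)−N(w)−{w}`, `N(w)−N(v)−{v}`, `N(v)∩N(w)`. -/
def PivotToggle (G : SimpleGraph V) (v w x y : V) : Prop :=
  (SideA G v w x ∧ SideB G v w y) ∨ (SideB G v w x ∧ SideA G v w y) ∨
  (SideA G v w x ∧ SideC G v w y) ∨ (SideC G v w x ∧ SideA G v w y) ∨
  (SideB G v w x ∧ SideC G v w y) ∨ (SideC G v w x ∧ SideB G v w y)

set_option linter.unusedSectionVars false in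
lemma pivotToggle_symm {G : SimpleGraph V} {v w x y : V}
    (h : PivotToggle G v w x y) : PivotToggle G v w y x := by
  unfold PivotToggle at h ⊢; tauto

/-- The graph `G ∧ vw` obtained by pivoting the edge `vw`: toggle adjacency across the
three sets and swap the labels of `v` and `w`. -/
def pivot (G : SimpleGraph V) (v w : V) : SimpleGraph V where
  Adj a b := a ≠ b ∧
    Xor' (G.Adj (Equiv.swap v w a) (Equiv.swap v w b))
         (PivotToggle G v w (Equiv.swap v w a) (Equiv.swap v w b))
  symm := by
    constructor
    intro a b h
    obtain ⟨hne, hx⟩ := h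
    refine ⟨hne.symm, ?_⟩
    have hA : G.Adj (Equiv.swap v w b) (Equiv.swap v w a) ↔
        G.Adj (Equiv.swap v w a) (Equiv.swap v w b) := SimpleGraph.adj_comm _ _ _
    have hT : PivotToggle G v w (Equiv.swap v w b) (Equiv.swap v w a) ↔
        PivotToggle G v w (Equiv.swap v w a) (Equiv.swap v w b) :=
      ⟨pivotToggle_symm, pivotToggle_symm⟩
    rw [hA, hT]
    exact hx
  loopless := by constructor; intro a h; exact h.1 rfl

/-- One pivot step along an edge. -/
def PivotStep (G H : SimpleGraph V) : Prop := ∃ v w, G.Adj v w ∧ H = pivot G v w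

/-- Pivot-equivalence: a sequence of pivots. -/
def PivotEquiv : SimpleGraph V → SimpleGraph V → Prop := Relation.ReflTransGen PivotStep

/-- `A` is a fully closed set of `G` restricted to `S`. -/
def FullyClosed (G : SimpleGraph V) (S A : Finset V) : Prop :=
  A ⊆ S ∧ cutRank G S A = 2 ∧ 2 < A.card ∧
    ∀ u ∈ S, u ∉ A → cutRank G S A < cutRank G S (insert u A)

/-- `{a,b,c}` is a triplet of `G` (on vertex set `univ`). -/
def Triplet (G : SimpleGraph V) (a b c : V) : Prop :=
  cutRank G Finset.univ {a, b, c} = 2 ∧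
  ∀ x ∈ ({a, b, c} : Finset V),
    cutRank G (Finset.univ \ {x}) (({a, b, c} : Finset V) \ {x}) = 2

/-- `B` is a `k`-branched set of `G` restricted to `S`. -/
inductive KBranched (G : SimpleGraph V) (S : Finset V) (k : ℕ) : Finset V → Prop
  | single (v : V) (hv : v ∈ S) (h : cutRank G S {v} ≤ k) : KBranched G S k {v}
  | split (B B' : Finset V) (hB : B ⊆ S) (h : cutRank G S B ≤ k)
      (h1 : B' ⊆ B) (h2 : B'.Nonempty) (h3 : B' ≠ B)
      (hb1 : KBranched G S k B') (hb2 : KBranched G S k (B \ B')) : KBranched G S k B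

/-- The rank-width of `G` restricted to `S`: the least `k` such that `S` is `k`-branched
(equivalently, the minimum width of a rank-decomposition). -/
noncomputable def rankWidth (G : SimpleGraph V) (S : Finset V) : ℕ :=
  sInf {k | S = ∅ ∨ KBranched G S k S}

/-- `A` is a titanic set of `G` restricted to `S`. -/
def Titanic (G : SimpleGraph V) (S A : Finset V) : Prop :=
  ∀ A1 A2 A3 : Finset V, A1 ∪ A2 ∪ A3 = A →
    Disjoint A1 A2 → Disjoint A1 A3 → Disjoint A2 A3 →
    cutRank G S A ≤ cutRank G S A1 ∨ cutRank G S A ≤ cutRank G S A2 ∨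
      cutRank G S A ≤ cutRank G S A3

open Module Submodule

/-!
Over GF(2), the conditions defining a triplet say that the columns of `a`, `b`, `c`, restricted
to the rows outside `{a, b, c}`, have rank 2 pairwise and jointly, so they sum to zero: every
other vertex sees an even number of `a`, `b`, `c`. Hence column `a` is the sum of columns `b`
and `c`, and deleting `a` does not lower the cut-rank of a set avoiding `{a, b, c}`.

A split of `G ∖ a` has cut-rank at most 2 in `G`, both with and without `a`, so by
`3⁺¹`-rank-connectivity and `|V| ≥ 8` one of its sides is a pair `{x, y}`. The pair `{b, c}` is
excluded by the triplet condition; a pair avoiding `b` and `c` keeps its cut-rank in `G`, where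
primality forbids it; a pair `{t, z}` with `t ∈ {b, c}`, `z ∉ {a, b, c}` would give `{a, b, c, z}`
cut-rank at most 2 in `G`. Connectivity is free: a disconnected graph on at least 4 vertices
has a split.
-/
section CutRank

omit [Fintype V]

lemma two_le_finrank_span_pair_iff {K M : Type*} [DivisionRing K] [AddCommGroup M] [Module K M]
    {x y : M} :
    2 ≤ finrank K (span K {x, y}) ↔ ∀ s t : K, s • x + t • y = 0 → s = 0 ∧ t = 0 := by
  rw [← LinearIndependent.pair_iff, linearIndependent_iff_card_le_finrank_span, Set.finrank,
    Matrix.range_cons, Matrix.range_cons, Matrix.range_empty, Set.union_empty,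
    Set.singleton_union, Fintype.card_fin]

lemma eq_add_of_finrank_span_triple_le_two {M : Type*} [AddCommGroup M] [Module (ZMod 2) M]
    {u v w : M} (huvw : finrank (ZMod 2) (span (ZMod 2) {u, v, w}) ≤ 2)
    (huv : 2 ≤ finrank (ZMod 2) (span (ZMod 2) {u, v}))
    (huw : 2 ≤ finrank (ZMod 2) (span (ZMod 2) {u, w}))
    (hvw : 2 ≤ finrank (ZMod 2) (span (ZMod 2) {v, w})) : u = v + w := by
  have two_cases : ∀ z : ZMod 2, z = 0 ∨ z = 1 := by decide
  rw [two_le_finrank_span_pair_iff] at huv huw hvw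
  have hdep : ¬ LinearIndependent (ZMod 2) ![u, v, w] := by
    rw [linearIndependent_iff_card_le_finrank_span, Set.finrank, Matrix.range_cons,
      Matrix.range_cons, Matrix.range_cons, Matrix.range_empty, Set.union_empty,
      Set.singleton_union, Set.singleton_union, Fintype.card_fin]
    omega
  obtain ⟨g, hg, i, hi⟩ := Fintype.not_linearIndependent_iff.1 hdep
  simp only [Fin.sum_univ_three, Matrix.cons_val_zero, Matrix.cons_val_one,
    Matrix.cons_val_two] at hg
  rcases two_cases (g 0) with h0 | h0 <;> rcases two_cases (g 1) with h1 | h1 <;>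
    rcases two_cases (g 2) with h2 | h2 <;>
    simp only [h0, h1, h2, zero_smul, one_smul, zero_add, add_zero] at hg
  · exact absurd (by fin_cases i <;> assumption) hi
  · simpa using (hvw 0 1 (by simpa using hg)).2
  · simpa using (hvw 1 0 (by simpa using hg)).1
  · simpa using (hvw 1 1 (by simpa using hg)).1
  · simpa using (huv 1 0 (by simpa using hg)).1
  · simpa using (huw 1 1 (by simpa using hg)).1
  · simpa using (huv 1 1 (by simpa using hg)).1
  · rw [← sub_eq_zero, ZModModule.sub_eq_add, ← add_assoc]
    simpa using hg

lemma finrank_span_insert_le {K M : Type*} [DivisionRing K] [AddCommGroup M] [Module K M]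
    [FiniteDimensional K M] (v : M) (s : Set M) :
    finrank K (span K (insert v s)) ≤ finrank K (span K s) + 1 := by
  rw [span_insert, add_comm]
  exact (finrank_add_le_finrank_add_finrank _ _).trans
    (Nat.add_le_add_right (by simpa using finrank_span_le_card ({v} : Set M)) _)

noncomputable def adjCol (G : SimpleGraph V) (X : Finset V) (v : V) : X → ZMod 2 :=
  fun i => G.adjMatrix (ZMod 2) i v

variable (G : SimpleGraph V)

omit [DecidableEq V] in
lemma cutRankOn_eq_rank_submatrix (X Y : Finset V) :
    cutRankOn G X Y = ((G.adjMatrix (ZMod 2)).submatrix ((↑) : X → V) ((↑) : Y → V)).rank := rfl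

omit [DecidableEq V] in
lemma cutRankOn_eq_finrank_span (X Y : Finset V) :
    cutRankOn G X Y = finrank (ZMod 2) (span (ZMod 2) (adjCol G X '' Y)) := by
  rw [cutRankOn_eq_rank_submatrix, Matrix.rank_eq_finrank_span_cols, Set.image_eq_range]
  rfl

omit [DecidableEq V] in
lemma cutRankOn_comm (X Y : Finset V) : cutRankOn G X Y = cutRankOn G Y X := by
  rw [cutRankOn_eq_rank_submatrix, cutRankOn_eq_rank_submatrix, ← Matrix.rank_transpose,
    Matrix.transpose_submatrix, G.transpose_adjMatrix]

omit [DecidableEq V] in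
lemma cutRankOn_mono {X X' Y Y' : Finset V} (hX : X' ⊆ X) (hY : Y' ⊆ Y) :
    cutRankOn G X' Y' ≤ cutRankOn G X Y := by
  have h := Matrix.rank_submatrix_le
    ((G.adjMatrix (ZMod 2)).submatrix ((↑) : X → V) ((↑) : Y → V))
    (fun i : X' => (⟨i.1, hX i.2⟩ : X)) (fun j : Y' => (⟨j.1, hY j.2⟩ : Y))
  rw [Matrix.submatrix_submatrix] at h
  exact h

omit [DecidableEq V] in
lemma cutRankOn_eq_zero {X Y : Finset V} (h : ∀ x ∈ X, ∀ y ∈ Y, ¬ G.Adj x y) :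
    cutRankOn G X Y = 0 := by
  have h0 : (G.adjMatrix (ZMod 2)).submatrix ((↑) : X → V) ((↑) : Y → V) = 0 := by
    ext i j
    simp [h i i.2 j j.2]
  rw [cutRankOn_eq_rank_submatrix, h0, Matrix.rank_zero]

lemma cutRankOn_insert_right_le (X Y : Finset V) (v : V) :
    cutRankOn G X (insert v Y) ≤ cutRankOn G X Y + 1 := by
  rw [cutRankOn_eq_finrank_span, cutRankOn_eq_finrank_span, coe_insert, Set.image_insert_eq]
  exact finrank_span_insert_le _ _

lemma cutRankOn_insert_left_le (X Y : Finset V) (v : V) :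
    cutRankOn G (insert v X) Y ≤ cutRankOn G X Y + 1 := by
  rw [cutRankOn_comm, cutRankOn_comm G X]
  exact cutRankOn_insert_right_le G Y X v

lemma cutRankOn_insert_of_adjMatrix_eq_add {X Y : Finset V} {a b c : V} (hb : b ∈ Y) (hc : c ∈ Y)
    (h : ∀ x ∈ X, G.adjMatrix (ZMod 2) x a = G.adjMatrix (ZMod 2) x b + G.adjMatrix (ZMod 2) x c) :
    cutRankOn G X (insert a Y) = cutRankOn G X Y := by
  have hcol : adjCol G X a = adjCol G X b + adjCol G X c := funext fun i => h i i.2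
  rw [cutRankOn_eq_finrank_span, cutRankOn_eq_finrank_span, coe_insert, Set.image_insert_eq,
    span_insert_eq_span]
  rw [hcol]
  exact add_mem (subset_span ⟨b, hb, rfl⟩) (subset_span ⟨c, hc, rfl⟩)

end CutRank

section Graph

omit [Fintype V]

variable {G : SimpleGraph V}

lemma cutRank_sdiff {S A : Finset V} (hA : A ⊆ S) : cutRank G S (S \ A) = cutRank G S A := by
  rw [cutRank, cutRank, Finset.sdiff_sdiff_eq_self hA, cutRankOn_comm]

lemma cutRank_le_cutRank_sdiff_singleton_add_one {S A : Finset V} {a : V} (ha : a ∈ S)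
    (haA : a ∉ A) : cutRank G S A ≤ cutRank G (S \ {a}) A + 1 := by
  have h : S \ A = insert a ((S \ {a}) \ A) := by grind
  rw [cutRank, cutRank, h]
  exact cutRankOn_insert_right_le G _ _ a

lemma cutRank_insert_le_cutRank_sdiff_singleton_add_one (S A : Finset V) (a : V) :
    cutRank G S (insert a A) ≤ cutRank G (S \ {a}) A + 1 := by
  have h : S \ insert a A = (S \ {a}) \ A := by grind
  rw [cutRank, cutRank, h]
  exact cutRankOn_insert_left_le G _ _ a

lemma RankConn.card_le_three_of_cutRank_le_two {S X : Finset V} (h : RankConn G S 3 1)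
    (hX : X ⊆ S) (hr : cutRank G S X ≤ 2) : X.card ≤ 3 ∨ (S \ X).card ≤ 3 := by
  have := h X hX (by omega)
  omega

lemma IsPrime.two_le_cutRank {S A : Finset V} (hp : IsPrime G S) (hA : A ⊆ S)
    (h2 : 2 ≤ A.card) (h2' : 2 ≤ (S \ A).card) : 2 ≤ cutRank G S A := by
  by_contra! h
  exact hp.2 A ⟨hA, by omega, h2, h2'⟩

lemma exists_cutRank_eq_zero_of_not_connected {S : Finset V} (hS : S.Nonempty)
    (h : ¬ (G.induce (S : Set V)).Connected) :
    ∃ B ⊆ S, B.Nonempty ∧ (S \ B).Nonempty ∧ cutRank G S B = 0 := by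
  obtain ⟨u, v, huv⟩ : ∃ u v, ¬ (G.induce (S : Set V)).Reachable u v := by
    by_contra! hr
    obtain ⟨s, hs⟩ := hS
    exact h ((SimpleGraph.connected_iff _).2 ⟨hr, ⟨⟨s, hs⟩⟩⟩)
  let B := S.filter fun w => ∃ hw : w ∈ S, (G.induce (S : Set V)).Reachable u ⟨w, hw⟩
  refine ⟨B, filter_subset _ _, ⟨u, mem_filter.2 ⟨u.2, u.2, .rfl⟩⟩, ⟨v, ?_⟩, ?_⟩
  · exact mem_sdiff.2 ⟨v.2, fun hv => huv (mem_filter.1 hv).2.2⟩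
  · refine cutRankOn_eq_zero G fun x hx y hy hxy => (mem_sdiff.1 hy).2 ?_
    obtain ⟨-, hxS, hux⟩ := mem_filter.1 hx
    have hyS := (mem_sdiff.1 hy).1
    exact mem_filter.2 ⟨hyS, hyS, hux.trans (SimpleGraph.Adj.reachable (by simpa using hxy))⟩

lemma isPrime_of_forall_not_isSplit {S : Finset V} (hS : 4 ≤ S.card)
    (h : ∀ A, ¬ IsSplit G S A) : IsPrime G S := by
  refine ⟨by_contra fun hc => ?_, h⟩
  obtain ⟨B, hBS, hB, hB', hB0⟩ :=
    exists_cutRank_eq_zero_of_not_connected (card_pos.1 (by omega)) hc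
  have not_isolated : ∀ v ∈ S, cutRank G S {v} ≠ 0 := by
    intro v hv h0
    obtain ⟨w, hw, hwv⟩ := exists_mem_ne (by omega : 1 < S.card) v
    refine h {w, v} ⟨by grind, ?_, (card_pair hwv).ge, ?_⟩
    · calc cutRankOn G {w, v} (S \ {w, v}) ≤ cutRankOn G {v} (S \ {w, v}) + 1 :=
            cutRankOn_insert_left_le G _ _ w
        _ ≤ cutRankOn G {v} (S \ {v}) + 1 := by
            gcongr; exact cutRankOn_mono G subset_rfl (by grind)
        _ = 1 := by rw [← cutRank, h0]
    · rw [card_sdiff_of_subset (by grind), card_pair hwv]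
      omega
  by_cases hB2 : 2 ≤ B.card
  · by_cases hB2' : 2 ≤ (S \ B).card
    · exact h B ⟨hBS, by omega, hB2, hB2'⟩
    · obtain ⟨v, hv⟩ : ∃ v, S \ B = {v} := card_eq_one.1 (by have := hB'.card_pos; omega)
      exact not_isolated v (by grind) (by rw [← hv, cutRank_sdiff hBS, hB0])
  · obtain ⟨v, rfl⟩ : ∃ v, B = {v} := card_eq_one.1 (by have := hB.card_pos; omega)
    exact not_isolated v (hBS (mem_singleton_self v)) hB0

end Graph

omit [Fintype V] in
lemma RankConn.card_eq_two_of_isSplit_sdiff_singleton {G : SimpleGraph V} {S A : Finset V}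
    {a : V} (h31 : RankConn G S 3 1) (hS : 8 ≤ S.card) (ha : a ∈ S)
    (hA : IsSplit G (S \ {a}) A) : A.card = 2 ∨ ((S \ {a}) \ A).card = 2 := by
  obtain ⟨hAS, hA1, hA2, hA2'⟩ := hA
  have haA : a ∉ A := fun h => by simpa using hAS h
  have hAS' : A ⊆ S := hAS.trans sdiff_subset
  have h1 := h31.card_le_three_of_cutRank_le_two hAS'
    ((cutRank_le_cutRank_sdiff_singleton_add_one ha haA).trans (by omega))
  have h2 := h31.card_le_three_of_cutRank_le_two (insert_subset ha hAS')
    ((cutRank_insert_le_cutRank_sdiff_singleton_add_one S A a).trans (by omega))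
  have hc1 : (S \ A).card = S.card - A.card := card_sdiff_of_subset hAS'
  have hc2 : (S \ insert a A).card = S.card - (A.card + 1) := by
    rw [card_sdiff_of_subset (insert_subset ha hAS'), card_insert_of_notMem haA]
  have hc3 : ((S \ {a}) \ A).card = S.card - 1 - A.card := by
    rw [card_sdiff_of_subset hAS, card_sdiff_of_subset (by simpa using ha), card_singleton]
  rw [card_insert_of_notMem haA] at h2
  omega

namespace Triplet

variable {G : SimpleGraph V} {a b c : V}

lemma swap₁₂ (ht : Triplet G a b c) : Triplet G b a c := by
  rwa [Triplet, insert_comm]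

lemma swap₂₃ (ht : Triplet G a b c) : Triplet G a c b := by
  rwa [Triplet, pair_comm]

lemma adjMatrix_eq_add (ht : Triplet G a b c) (hab : a ≠ b) (hac : a ≠ c) (hbc : b ≠ c)
    {x : V} (hx : x ∉ ({a, b, c} : Finset V)) :
    G.adjMatrix (ZMod 2) x a = G.adjMatrix (ZMod 2) x b + G.adjMatrix (ZMod 2) x c := by
  set Y := univ \ ({a, b, c} : Finset V)
  have hdel : ∀ d ∈ ({a, b, c} : Finset V), cutRank G (univ \ {d}) ({a, b, c} \ {d}) =
      cutRankOn G Y ({a, b, c} \ {d}) := fun d hd => by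
    rw [cutRank, cutRankOn_comm, show (univ \ {d}) \ ({a, b, c} \ {d}) = Y by grind]
  have habc := ht.1
  have hbc2 := ht.2 a (by simp)
  have hac2 := ht.2 b (by simp)
  have hab2 := ht.2 c (by simp)
  rw [cutRank, cutRankOn_comm, cutRankOn_eq_finrank_span, coe_insert, coe_pair,
    Set.image_insert_eq, Set.image_pair] at habc
  rw [hdel a (by simp), show ({a, b, c} : Finset V) \ {a} = {b, c} by grind,
    cutRankOn_eq_finrank_span, coe_pair, Set.image_pair] at hbc2
  rw [hdel b (by simp), show ({a, b, c} : Finset V) \ {b} = {a, c} by grind,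
    cutRankOn_eq_finrank_span, coe_pair, Set.image_pair] at hac2
  rw [hdel c (by simp), show ({a, b, c} : Finset V) \ {c} = {a, b} by grind,
    cutRankOn_eq_finrank_span, coe_pair, Set.image_pair] at hab2
  have hcol := eq_add_of_finrank_span_triple_le_two habc.le hab2.ge hac2.ge hbc2.ge
  exact congrFun hcol ⟨x, by simpa [Y] using hx⟩

lemma cutRank_sdiff_singleton_eq (ht : Triplet G a b c) (hab : a ≠ b) (hac : a ≠ c)
    (hbc : b ≠ c) {X : Finset V} (hX : Disjoint X {a, b, c}) :
    cutRank G (univ \ {a}) X = cutRank G univ X := by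
  simp only [disjoint_insert_right, disjoint_singleton_right] at hX
  have h : univ \ X = insert a ((univ \ {a}) \ X) := by grind
  rw [cutRank, cutRank, h, cutRankOn_insert_of_adjMatrix_eq_add G (b := b) (c := c)
    (by simp [hab.symm, hX.2.1]) (by simp [hac.symm, hX.2.2])]
  exact fun x hx => ht.adjMatrix_eq_add hab hac hbc (by grind)

lemma cutRank_le_cutRank_pair_add_one (ht : Triplet G a b c) (hab : a ≠ b) (hac : a ≠ c)
    (hbc : b ≠ c) {t z : V} (htbc : t = b ∨ t = c) (hz : z ∉ ({a, b, c} : Finset V)) :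
    cutRank G univ {a, b, c, z} ≤ cutRank G (univ \ {a}) {t, z} + 1 := by
  set Q : Finset V := {a, b, c, z}
  obtain ⟨s, hs⟩ : ∃ s, ({b, c, z} : Finset V) = insert s {t, z} := by
    rcases htbc with rfl | rfl
    exacts [⟨c, by grind⟩, ⟨b, by grind⟩]
  calc cutRank G univ Q = cutRankOn G (univ \ Q) (insert a {b, c, z}) := cutRankOn_comm G _ _
    _ = cutRankOn G (univ \ Q) {b, c, z} :=
        cutRankOn_insert_of_adjMatrix_eq_add G (by simp) (by simp)
          fun x hx => ht.adjMatrix_eq_add hab hac hbc (by grind)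
    _ ≤ cutRankOn G (univ \ Q) {t, z} + 1 := hs ▸ cutRankOn_insert_right_le G _ _ s
    _ ≤ cutRankOn G ((univ \ {a}) \ {t, z}) {t, z} + 1 := by
        gcongr
        exact cutRankOn_mono G (by grind) subset_rfl
    _ = cutRank G (univ \ {a}) {t, z} + 1 := by rw [cutRank, cutRankOn_comm]

lemma two_le_cutRank_pair (hp : IsPrime G univ) (h31 : RankConn G univ 3 1)
    (hcard : 8 ≤ Fintype.card V) (ht : Triplet G a b c) (hab : a ≠ b) (hac : a ≠ c)
    (hbc : b ≠ c) {x y : V} (hxy : x ≠ y) (hxa : x ≠ a) (hya : y ≠ a) :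
    2 ≤ cutRank G (univ \ {a}) {x, y} := by
  have quad : ∀ t z, t = b ∨ t = c → z ∉ ({a, b, c} : Finset V) →
      2 ≤ cutRank G (univ \ {a}) {t, z} := by
    intro t z htbc hz
    by_contra! hle
    have hQ : ({a, b, c, z} : Finset V).card = 4 := by grind
    have := h31.card_le_three_of_cutRank_le_two (subset_univ _)
      ((ht.cutRank_le_cutRank_pair_add_one hab hac hbc htbc hz).trans (by omega))
    rw [card_univ_sdiff, hQ] at this
    omega
  by_cases hx : x = b ∨ x = c <;> by_cases hy : y = b ∨ y = c
  · have h2 := ht.2 a (by simp)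
    rw [show ({a, b, c} : Finset V) \ {a} = {x, y} by grind] at h2
    exact h2.ge
  · exact quad x y hx (by grind)
  · rw [pair_comm]
    exact quad y x hy (by grind)
  · rw [ht.cutRank_sdiff_singleton_eq hab hac hbc (by
      simp only [disjoint_insert_left, disjoint_singleton_left, mem_insert, mem_singleton]
      tauto)]
    refine hp.two_le_cutRank (subset_univ _) (card_pair hxy).ge ?_
    rw [card_univ_sdiff, card_pair hxy]
    omega

theorem isPrime_sdiff_singleton (hp : IsPrime G univ) (h31 : RankConn G univ 3 1)
    (hcard : 8 ≤ Fintype.card V) (ht : Triplet G a b c) (hab : a ≠ b) (hac : a ≠ c)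
    (hbc : b ≠ c) : IsPrime G (univ \ {a}) := by
  have hS : (univ \ {a}).card = Fintype.card V - 1 := by simp [card_univ_sdiff]
  refine isPrime_of_forall_not_isSplit (by omega) fun A hA => ?_
  obtain ⟨P, hPS, hP1, hP2⟩ : ∃ P ⊆ univ \ {a}, cutRank G (univ \ {a}) P ≤ 1 ∧ P.card = 2 := by
    rcases h31.card_eq_two_of_isSplit_sdiff_singleton (by simpa) (mem_univ a) hA with h | h
    · exact ⟨A, hA.1, hA.2.1, h⟩
    · exact ⟨_, sdiff_subset, (cutRank_sdiff hA.1).trans_le hA.2.1, h⟩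
  obtain ⟨x, y, hxy, rfl⟩ := card_eq_two.1 hP2
  have hxa : x ≠ a := by simpa using hPS (mem_insert_self x {y})
  have hya : y ≠ a := by simpa using hPS (mem_insert_of_mem (mem_singleton_self y))
  have := ht.two_le_cutRank_pair hp h31 hcard hab hac hbc hxy hxa hya
  omega

end Triplet

theorem triplet_del_prime {G : SimpleGraph V} (hp : IsPrime G Finset.univ)
    (h31 : RankConn G Finset.univ 3 1) (hcard : 8 ≤ Fintype.card V)
    {a b c : V} (hab : a ≠ b) (hac : a ≠ c) (hbc : b ≠ c)
    (ht : Triplet G a b c) :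
    IsPrime G (Finset.univ \ {a}) ∧ IsPrime G (Finset.univ \ {b}) ∧ IsPrime G (Finset.univ \ {c}) :=
  ⟨ht.isPrime_sdiff_singleton hp h31 hcard hab hac hbc,
    ht.swap₁₂.isPrime_sdiff_singleton hp h31 hcard hab.symm hbc hac,
    ht.swap₂₃.swap₁₂.isPrime_sdiff_singleton hp h31 hcard hac.symm hbc.symm hab⟩
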